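/- Fix a horizon H ≥ 1. Let (Ω, P) be a probability space, let T : Ω → ℕ ∪ {∞} be a random variable (the extended hitting time), and for each t ∈ {1,...,H} let A_t ⊆ Ω be an event (the event that the agent is in the goal region at time t). Suppose p ∈ [0,1] satisfies: for every t ∈ {1,...,H} with P(T < t) > 0, P(A_t^c | T < t) ≤ p. Then E[∑_{t=1}^{H} 1_{A_t}] ≥ (1 - p) · (H - E[min(T, H)]). -/

import Mathlib

open MeasureTheory

lemma nat_aux (n H : ℕ) : ∑ t ∈ Finset.Icc 1 H, (if t ≤ n then 1 else 0) = min n H := by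
  induction H with
  | zero => simp
  | succ H ih =>
    rw [Finset.sum_Icc_succ_top (by omega : 1 ≤ H + 1), ih]
    rcases le_or_gt (H + 1) n with h | h
    · rw [if_pos h]; omega
    · rw [if_neg (by omega)]; omega

lemma enat_aux (x : ℕ∞) (H : ℕ) :
    ((min x (H : ℕ∞)).toNat : ℝ)
      = ∑ t ∈ Finset.Icc 1 H, (if (t : ℕ∞) ≤ x then (1 : ℝ) else 0) := by
  cases x with
  | top => simp
  | coe n =>
    have h1 : (min (n : ℕ∞) (H : ℕ∞)).toNat = min n H := by
      rcases le_total n H with h | h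
      · rw [min_eq_left (by exact_mod_cast h), min_eq_left h]; simp
      · rw [min_eq_right (by exact_mod_cast h), min_eq_right h]; simp
    rw [h1, ← nat_aux n H]
    rw [Nat.cast_sum]
    refine Finset.sum_congr rfl fun t _ => ?_
    by_cases h : t ≤ n
    · rw [if_pos h, if_pos (by exact_mod_cast h)]; norm_num
    · rw [if_neg h, if_neg (by exact_mod_cast h)]; norm_num

/-- Goal-occupancy lower bound (Proposition 1):
    `E[∑_{t=1}^H 1_{A_t}] ≥ (1 - p)(H - E[min(T, H)])`. -/
theorem stmt4 {Ω : Type*} [MeasurableSpace Ω] (P : Measure Ω) [IsProbabilityMeasure P]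
    (H : ℕ) (hH : 1 ≤ H) (T : Ω → ℕ∞)
    (hTmeas : ∀ t : ℕ, MeasurableSet {ω | T ω < (t : ℕ∞)})
    (A : ℕ → Set Ω) (hA : ∀ t, MeasurableSet (A t))
    (p : ℝ) (hp0 : 0 ≤ p) (hp1 : p ≤ 1)
    (hcond : ∀ t ∈ Finset.Icc 1 H, 0 < P {ω | T ω < (t : ℕ∞)} →
      (P ((A t)ᶜ ∩ {ω | T ω < (t : ℕ∞)})).toReal / (P {ω | T ω < (t : ℕ∞)}).toReal ≤ p) :
    ∫ ω, (∑ t ∈ Finset.Icc 1 H, Set.indicator (A t) (fun _ => (1 : ℝ)) ω) ∂P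
      ≥ (1 - p) * ((H : ℝ) - ∫ ω, ((min (T ω) (H : ℕ∞)).toNat : ℝ) ∂P) := by
  set B : ℕ → Set Ω := fun t => {ω | T ω < (t : ℕ∞)} with hBdef
  -- per-t key bound
  have key : ∀ t ∈ Finset.Icc 1 H, (1 - p) * (P (B t)).toReal ≤ (P (A t)).toReal := by
    intro t ht
    rcases eq_or_lt_of_le (zero_le : 0 ≤ P (B t)) with h0 | h0
    · rw [← h0]
      simp [ENNReal.toReal_nonneg]
    · have hcond' := hcond t ht h0
      have hBpos : 0 < (P (B t)).toReal :=
        ENNReal.toReal_pos h0.ne' (measure_ne_top _ _)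
      rw [div_le_iff₀ hBpos] at hcond'
      have hsplit : (P (A t ∩ B t)).toReal + (P ((A t)ᶜ ∩ B t)).toReal = (P (B t)).toReal := by
        rw [← ENNReal.toReal_add (measure_ne_top _ _) (measure_ne_top _ _)]
        congr 1
        have := measure_inter_add_diff (μ := P) (B t) (hA t)
        rw [Set.diff_eq] at this
        rw [Set.inter_comm (A t), Set.inter_comm ((A t)ᶜ)]
        exact this
      have hmono : (P (A t ∩ B t)).toReal ≤ (P (A t)).toReal :=
        ENNReal.toReal_mono (measure_ne_top _ _) (measure_mono Set.inter_subset_left)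
      nlinarith [hcond', hsplit, hmono]
  -- LHS integral
  have hLHS : ∫ ω, (∑ t ∈ Finset.Icc 1 H, Set.indicator (A t) (fun _ => (1 : ℝ)) ω) ∂P
      = ∑ t ∈ Finset.Icc 1 H, (P (A t)).toReal := by
    rw [integral_finset_sum _ (fun t _ => (integrable_const (1 : ℝ)).indicator (hA t))]
    refine Finset.sum_congr rfl fun t _ => ?_
    rw [integral_indicator_const _ (hA t)]
    simp [Measure.real]
  -- sets {T ≥ t}
  have hC : ∀ t : ℕ, MeasurableSet {ω | (t : ℕ∞) ≤ T ω} := by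
    intro t
    have h := (hTmeas t).compl
    have hset : {ω | T ω < (t : ℕ∞)}ᶜ = {ω | (t : ℕ∞) ≤ T ω} := by
      ext ω; simp [not_lt]
    rwa [hset] at h
  have hmin : ∫ ω, ((min (T ω) (H : ℕ∞)).toNat : ℝ) ∂P
      = ∑ t ∈ Finset.Icc 1 H, (P {ω | (t : ℕ∞) ≤ T ω}).toReal := by
    have heq : ∀ ω, ((min (T ω) (H : ℕ∞)).toNat : ℝ)
        = ∑ t ∈ Finset.Icc 1 H,
            Set.indicator {ω | (t : ℕ∞) ≤ T ω} (fun _ => (1 : ℝ)) ω := by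
      intro ω
      rw [enat_aux]
      refine Finset.sum_congr rfl fun t _ => ?_
      by_cases h : (t : ℕ∞) ≤ T ω <;> simp [Set.indicator, h]
    simp_rw [heq]
    rw [integral_finset_sum _ (fun t _ => (integrable_const (1 : ℝ)).indicator (hC t))]
    refine Finset.sum_congr rfl fun t _ => ?_
    rw [integral_indicator_const _ (hC t)]
    simp [Measure.real]
  have hcompl : ∀ t : ℕ, (P {ω | (t : ℕ∞) ≤ T ω}).toReal = 1 - (P (B t)).toReal := by
    intro t
    have hset : {ω | (t : ℕ∞) ≤ T ω} = (B t)ᶜ := by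
      ext ω; simp [hBdef, not_lt]
    rw [hset, measure_compl (hTmeas t) (measure_ne_top _ _), measure_univ,
      ENNReal.toReal_sub_of_le prob_le_one (by simp)]
    simp [hBdef]
  have hRHS : (H : ℝ) - ∫ ω, ((min (T ω) (H : ℕ∞)).toNat : ℝ) ∂P
      = ∑ t ∈ Finset.Icc 1 H, (P (B t)).toReal := by
    rw [hmin]
    simp_rw [hcompl]
    rw [Finset.sum_sub_distrib, Finset.sum_const, Nat.card_Icc]
    simp
  rw [ge_iff_le, hLHS, hRHS, Finset.mul_sum]
  exact Finset.sum_le_sum key
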